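/- arXiv:1204.3239 — 3 statements merged into one kernel-verified Lean document; each statement's English description precedes it below -/
import Mathlib

section
/- Let σ be a permutation of {1,…,n} and let a < b be elements such that every element c strictly between a and b in the one-line notation of σ satisfies c < a or c > b. If τ is obtained from σ by transposing a and b (leaving all other elements fixed), then π(σ)/π(τ) = p_{a,b}/p_{b,a}, provided that the probabilities P have league structure: p_{i,j} = q_{i∨j} for all i < j, where i∨j denotes the lowest common ancestor in a fixed rooted binary tree T with leaves 1,…,n, and every element between a and b in σ is not a descendant of a∨b in T. -/
/-- A rooted binary tree with leaves labeled by `Fin n` and internal nodes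
labeled by real numbers (the league probabilities). -/
inductive LBTree (n : ℕ) : Type
  | leaf (x : Fin n) : LBTree n
  | node (q : ℝ) (l r : LBTree n) : LBTree n

namespace LBTree

/-- The list of leaf labels, from left to right. -/
def leaves {n : ℕ} : LBTree n → List (Fin n)
  | .leaf x => [x]
  | .node _ l r => l.leaves ++ r.leaves

/-- The label at the root, if the root is an internal node. -/
def rootQ {n : ℕ} : LBTree n → Option ℝ
  | .leaf _ => none
  | .node q _ _ => some q

/-- The subtree rooted at the lowest common ancestor of the leaves `i` and `j`
(if both occur in the tree). -/
def lcaSub {n : ℕ} : LBTree n → Fin n → Fin n → Option (LBTree n)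
  | .leaf x, i, j => if i = x ∧ j = x then some (.leaf x) else none
  | .node q l r, i, j =>
      if i ∈ l.leaves ∧ j ∈ l.leaves then l.lcaSub i j
      else if i ∈ r.leaves ∧ j ∈ r.leaves then r.lcaSub i j
      else if i ∈ l.leaves ++ r.leaves ∧ j ∈ l.leaves ++ r.leaves then
        some (.node q l r)
      else none

end LBTree

/-- The (unnormalized) stationary weight `π(σ) ∝ ∏_{k < ℓ} p_{σ(k), σ(ℓ)}`. -/
def permWeight (n : ℕ) (P : Fin n → Fin n → ℝ) (σ : Equiv.Perm (Fin n)) : ℝ :=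
  ∏ q ∈ Finset.univ.filter (fun q : Fin n × Fin n => q.1 < q.2), P (σ q.1) (σ q.2)

/-!
Let `i < j` be the positions of `a` and `b` in `σ`, so that `τ = σ ∘ (i j)`. Swapping `i` and `j`
in both entries of every pair of positions that avoids the interval `(i, j)` is an involution of
the pairs `k < l` other than `(i, j)`, and it matches the factors of `π(τ)` with those of `π(σ)`.
The remaining pairs have an entry `m ∈ (i, j)`; for them `c = σ m` is not a descendant of `a ∨ b`,
so `a ∨ c = b ∨ c`, and as `c` is not between `a` and `b` in value, the league structure gives
`p_{a,c} = p_{b,c}` and `p_{c,a} = p_{c,b}`: these factors coincide too. What is left is `p_{a,b}`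
in `π(σ)` against `p_{b,a}` in `π(τ)`.
-/

namespace LBTree

variable {n : ℕ}

theorem lcaSub_comm (T : LBTree n) (i j : Fin n) : T.lcaSub i j = T.lcaSub j i := by
  induction T with
  | leaf x => simp [lcaSub, and_comm]
  | node q l r ihl ihr => simp [lcaSub, and_comm, ihl, ihr]

theorem lcaSub_eq_lcaSub_of_notMem {T t : LBTree n} (hnd : T.leaves.Nodup) {a b c : Fin n}
    (ht : T.lcaSub a b = some t) (hc : c ∈ T.leaves) (hct : c ∉ t.leaves) :
    T.lcaSub a c = T.lcaSub b c := by
  induction T with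
  | leaf x =>
    simp only [lcaSub, leaves, List.mem_singleton] at ht hc
    split_ifs at ht
    cases ht
    exact absurd (by simp [leaves, hc]) hct
  | node q l r ihl ihr =>
    simp only [leaves, List.nodup_append] at hnd
    obtain ⟨hndl, hndr, hdisj⟩ := hnd
    simp only [leaves, List.mem_append] at hc
    simp only [lcaSub, List.mem_append] at ht ⊢
    split_ifs at ht with hab_l hab_r
    · rcases hc with hcl | hcr
      · simp only [hab_l, hcl, and_self, if_true]
        exact ihl hndl ht hcl
      · grind -- `c` and `{a, b}` lie on different sides of the root, the LCA of both pairs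
    · rcases hc with hcl | hcr
      · grind
      · have := ihr hndr ht hcr
        grind
    · cases ht
      exact absurd (by simpa [leaves] using hc) hct

end LBTree

section

open Finset

variable {ι : Type*} [LinearOrder ι]

theorem swap_lt_swap_of_notMem_Ioo {i j k l : ι} (hij : i < j) (hkl : k < l)
    (hne : (k, l) ≠ (i, j)) (hk : k ∉ Set.Ioo i j) (hl : l ∉ Set.Ioo i j) :
    Equiv.swap i j k < Equiv.swap i j l := by
  simp only [Set.mem_Ioo, Equiv.swap_apply_def] at hk hl ⊢
  split_ifs <;> grind

theorem swap_notMem_Ioo {i j k : ι} (hk : k ∉ Set.Ioo i j) :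
    Equiv.swap i j k ∉ Set.Ioo i j := by
  simp only [Set.mem_Ioo, Equiv.swap_apply_def] at hk ⊢
  split_ifs <;> grind

def swapOffIoo (i j : ι) (p : ι × ι) : ι × ι :=
  if p.1 ∈ Set.Ioo i j ∨ p.2 ∈ Set.Ioo i j then p
  else (Equiv.swap i j p.1, Equiv.swap i j p.2)

theorem swapOffIoo_involutive (i j : ι) : Function.Involutive (swapOffIoo i j) := by
  rintro ⟨k, l⟩
  unfold swapOffIoo
  by_cases h : k ∈ Set.Ioo i j ∨ l ∈ Set.Ioo i j
  · rw [if_pos h, if_pos h]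
  · have h' := not_or.mp h
    rw [if_neg h, if_neg (not_or.mpr ⟨swap_notMem_Ioo h'.1, swap_notMem_Ioo h'.2⟩),
      Equiv.swap_apply_self, Equiv.swap_apply_self]

theorem swapOffIoo_mem_erase [Fintype ι] {i j : ι} (hij : i < j) {p : ι × ι}
    (hp : p ∈ (univ.filter (fun q : ι × ι => q.1 < q.2)).erase (i, j)) :
    swapOffIoo i j p ∈ (univ.filter (fun q : ι × ι => q.1 < q.2)).erase (i, j) := by
  obtain ⟨k, l⟩ := p
  simp only [mem_erase, mem_filter, mem_univ, true_and] at hp ⊢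
  unfold swapOffIoo
  split_ifs with h
  · exact hp
  · refine ⟨?_, swap_lt_swap_of_notMem_Ioo hij hp.2 hp.1 (not_or.mp h).1 (not_or.mp h).2⟩
    simp only [ne_eq, Prod.mk.injEq, Equiv.swap_apply_eq_iff, Equiv.swap_apply_left,
      Equiv.swap_apply_right]
    rintro ⟨rfl, rfl⟩
    exact hp.2.not_gt hij

theorem apply_swap_eq_of_mem_Ioo {M : Type*} (g : ι → ι → M) {i j : ι}
    (hmid : ∀ m ∈ Set.Ioo i j, g i m = g j m ∧ g m i = g m j) {k l : ι} (hkl : k < l)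
    (h : k ∈ Set.Ioo i j ∨ l ∈ Set.Ioo i j) :
    g (Equiv.swap i j k) (Equiv.swap i j l) = g k l := by
  rcases h with hk | hl
  · rw [Equiv.swap_apply_of_ne_of_ne hk.1.ne' hk.2.ne]
    by_cases hlj : l = j
    · rw [hlj, Equiv.swap_apply_right]
      exact (hmid k hk).2
    · rw [Equiv.swap_apply_of_ne_of_ne (hk.1.trans hkl).ne' hlj]
  · rw [Equiv.swap_apply_of_ne_of_ne hl.1.ne' hl.2.ne]
    by_cases hki : k = i
    · rw [hki, Equiv.swap_apply_left]
      exact (hmid l hl).1.symm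
    · rw [Equiv.swap_apply_of_ne_of_ne hki (hkl.trans hl.2).ne]

theorem prod_lt_pairs_comp_swap [Fintype ι] {M : Type*} [CommMonoid M] (g : ι → ι → M)
    {i j : ι} (hij : i < j) (hmid : ∀ m ∈ Set.Ioo i j, g i m = g j m ∧ g m i = g m j) :
    (∏ q ∈ univ.filter (fun q : ι × ι => q.1 < q.2), g q.1 q.2) * g j i =
      (∏ q ∈ univ.filter (fun q : ι × ι => q.1 < q.2),
        g (Equiv.swap i j q.1) (Equiv.swap i j q.2)) * g i j := by
  set S := univ.filter (fun q : ι × ι => q.1 < q.2)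
  have hij_mem : (i, j) ∈ S := by simpa [S] using hij
  have hrest : ∏ q ∈ S.erase (i, j), g q.1 q.2 =
      ∏ q ∈ S.erase (i, j), g (Equiv.swap i j q.1) (Equiv.swap i j q.2) := by
    refine prod_nbij' (swapOffIoo i j) (swapOffIoo i j) (fun p hp => swapOffIoo_mem_erase hij hp)
      (fun p hp => swapOffIoo_mem_erase hij hp) (fun p _ => swapOffIoo_involutive i j p)
      (fun p _ => swapOffIoo_involutive i j p) ?_
    rintro ⟨k, l⟩ hp
    simp only [S, mem_erase, mem_filter, mem_univ, true_and] at hp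
    unfold swapOffIoo
    split_ifs with h
    · exact (apply_swap_eq_of_mem_Ioo g hmid hp.2 h).symm
    · simp only [Equiv.swap_apply_self]
  rw [← Finset.mul_prod_erase S _ hij_mem, ← Finset.mul_prod_erase S _ hij_mem, hrest,
    Equiv.swap_apply_left, Equiv.swap_apply_right]
  dsimp only
  ac_rfl
end

theorem league_prob_eq_of_notMem_lcaSub {n : ℕ} {T t : LBTree n} {P : Fin n → Fin n → ℝ}
    (hnd : T.leaves.Nodup) (hrev : ∀ i j : Fin n, i ≠ j → P j i = 1 - P i j)
    (hstruct : ∀ i j : Fin n, i < j → (T.lcaSub i j).bind LBTree.rootQ = some (P i j))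
    {a b c : Fin n} (hab : a < b) (ht : T.lcaSub a b = some t) (hc : c ∈ T.leaves)
    (hct : c ∉ t.leaves) (hside : c < a ∨ b < c) :
    P a c = P b c ∧ P c a = P c b := by
  have hlca := LBTree.lcaSub_eq_lcaSub_of_notMem hnd ht hc hct
  rcases hside with hca | hbc
  · have hcb := hca.trans hab
    have hP : P c a = P c b := by
      have h := hstruct c a hca
      rw [LBTree.lcaSub_comm, hlca, LBTree.lcaSub_comm, hstruct c b hcb] at h
      exact (Option.some.inj h).symm
    exact ⟨by rw [hrev c a hca.ne, hrev c b hcb.ne, hP], hP⟩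
  · have hac := hab.trans hbc
    have hP : P a c = P b c := by
      have h := hstruct a c hac
      rw [hlca, hstruct b c hbc] at h
      exact (Option.some.inj h).symm
    exact ⟨hP, by rw [hrev a c hac.ne, hrev b c hbc.ne, hP]⟩

theorem league_transposition_ratio_general (n : ℕ) (T : LBTree n) (P : Fin n → Fin n → ℝ)
    (hT : T.leaves = List.finRange n)
    (hrev : ∀ i j : Fin n, i ≠ j → P j i = 1 - P i j)
    (hstruct : ∀ i j : Fin n, i < j →
      (T.lcaSub i j).bind LBTree.rootQ = some (P i j))
    (σ : Equiv.Perm (Fin n)) (a b : Fin n) (hab : a < b)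
    (horder : σ.symm a < σ.symm b)
    (hbetween : ∀ m : Fin n, σ.symm a < m → m < σ.symm b →
      ((σ m < a ∨ b < σ m) ∧
        ∀ t : LBTree n, T.lcaSub a b = some t → σ m ∉ t.leaves)) :
    permWeight n P σ * P b a =
      permWeight n P (Equiv.swap a b * σ) * P a b := by
  obtain ⟨t, ht, -⟩ := Option.bind_eq_some_iff.mp (hstruct a b hab)
  have hnd : T.leaves.Nodup := hT ▸ List.nodup_finRange n
  have hswap : Equiv.swap a b * σ = σ * Equiv.swap (σ.symm a) (σ.symm b) := by
    rw [Equiv.mul_swap_eq_swap_mul, σ.apply_symm_apply, σ.apply_symm_apply]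
  have hmid : ∀ m ∈ Set.Ioo (σ.symm a) (σ.symm b),
      P a (σ m) = P b (σ m) ∧ P (σ m) a = P (σ m) b := fun m hm =>
    league_prob_eq_of_notMem_lcaSub hnd hrev hstruct hab ht (hT ▸ List.mem_finRange _)
      ((hbetween m hm.1 hm.2).2 t ht) (hbetween m hm.1 hm.2).1
  simpa [permWeight, hswap] using
    prod_lt_pairs_comp_swap (fun k l => P (σ k) (σ l)) horder (by simpa using hmid)

/-- If `P` has league structure `T` (i.e. `p_{i,j} = q_{i ∨ j}` for `i < j`), `a < b`,
`a` appears before `b` in `σ`, and every element `c` strictly between `a` and `b`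
in the one-line notation of `σ` satisfies `c < a` or `c > b` and is not a descendant
of `a ∨ b` in `T`, then transposing `a` and `b` changes the weight by exactly
the factor `p_{a,b} / p_{b,a}`; equivalently `π(σ) · p_{b,a} = π(τ) · p_{a,b}`. -/
theorem league_transposition_ratio (n : ℕ) (T : LBTree n) (P : Fin n → Fin n → ℝ)
    (hT : T.leaves = List.finRange n)
    (hq : ∀ i j : Fin n, i < j → (1 : ℝ) / 2 ≤ P i j ∧ P i j ≤ 1)
    (hrev : ∀ i j : Fin n, i ≠ j → P j i = 1 - P i j)
    (hstruct : ∀ i j : Fin n, i < j →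
      (T.lcaSub i j).bind LBTree.rootQ = some (P i j))
    (σ : Equiv.Perm (Fin n)) (a b : Fin n) (hab : a < b)
    (horder : σ.symm a < σ.symm b)
    (hbetween : ∀ m : Fin n, σ.symm a < m → m < σ.symm b →
      ((σ m < a ∨ b < σ m) ∧
        ∀ t : LBTree n, T.lcaSub a b = some t → σ m ∉ t.leaves)) :
    permWeight n P σ * P b a =
      permWeight n P (Equiv.swap a b * σ) * P a b :=
  league_transposition_ratio_general n T P hT hrev hstruct σ a b hab horder hbetween
end

section
/- Let P be the transition matrix of a Markov chain on a product state space Ω = Ω_1 × ⋯ × Ω_M that factors as a product: P^t(x,y) = ∏_i B_i^t(x_i,y_i), where each B_i is a transition matrix on Ω_i with stationary distribution π_i, and π = ∏_i π_i. Then the total variation distances satisfy 1 + 2·d_tv(P^t, π) ≤ ∏_i (1 + 2·d_tv(B_i^t, π_i)). -/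
/-!
For weights `p, q` with total mass one, `∑ max (p, q) = 1 + tv` and `∑ min (p, q) = 1 - tv`.
Sandwiching `∏ p_i` and `∏ q_i` between `∏ min` and `∏ max` pointwise and expanding the
products of sums gives `2 tv(∏ p_i, ∏ q_i) ≤ ∏ (1 + u_i) - ∏ (1 - u_i)` with `u_i = tv(p_i, q_i)`,
and for `u_i ∈ [0, 1]` the right-hand side is at most `∏ (1 + 2 u_i) - 1`.
-/

open Finset

noncomputable def tvDist {α : Type*} [Fintype α] (p q : α → ℝ) : ℝ :=
  (1 / 2) * ∑ y, |p y - q y|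

section TotalVariation

variable {α : Type*} [Fintype α] {p q : α → ℝ}

lemma tvDist_nonneg : 0 ≤ tvDist p q := by
  unfold tvDist
  positivity

lemma two_mul_tvDist (p q : α → ℝ) : 2 * tvDist p q = ∑ y, |p y - q y| := by
  rw [tvDist]
  ring

lemma sum_max_sub_sum_min (p q : α → ℝ) :
    ∑ y, max (p y) (q y) - ∑ y, min (p y) (q y) = 2 * tvDist p q := by
  simp only [two_mul_tvDist, ← sum_sub_distrib, max_sub_min_eq_abs']

lemma sum_min_add_sum_max (p q : α → ℝ) :
    ∑ y, min (p y) (q y) + ∑ y, max (p y) (q y) = ∑ y, p y + ∑ y, q y := by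
  simp only [← sum_add_distrib, min_add_max]

variable (hp : ∑ y, p y = 1) (hq : ∑ y, q y = 1)
include hp hq

lemma sum_max_eq_one_add_tvDist : ∑ y, max (p y) (q y) = 1 + tvDist p q := by
  linarith [sum_max_sub_sum_min p q, sum_min_add_sum_max p q]

lemma sum_min_eq_one_sub_tvDist : ∑ y, min (p y) (q y) = 1 - tvDist p q := by
  linarith [sum_max_sub_sum_min p q, sum_min_add_sum_max p q]

lemma tvDist_le_one (hp0 : ∀ y, 0 ≤ p y) (hq0 : ∀ y, 0 ≤ q y) : tvDist p q ≤ 1 := by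
  have : 0 ≤ ∑ y, min (p y) (q y) := sum_nonneg fun y _ ↦ le_min (hp0 y) (hq0 y)
  linarith [sum_min_eq_one_sub_tvDist hp hq]

end TotalVariation

lemma abs_prod_sub_prod_le_prod_max_sub_prod_min {ι : Type*} (s : Finset ι) {a b : ι → ℝ}
    (ha : ∀ i ∈ s, 0 ≤ a i) (hb : ∀ i ∈ s, 0 ≤ b i) :
    |∏ i ∈ s, a i - ∏ i ∈ s, b i| ≤
      ∏ i ∈ s, max (a i) (b i) - ∏ i ∈ s, min (a i) (b i) := by
  have hmin : ∀ i ∈ s, 0 ≤ min (a i) (b i) := fun i hi ↦ le_min (ha i hi) (hb i hi)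
  have ha_max := prod_le_prod ha fun i _ ↦ le_max_left (a i) (b i)
  have hb_max := prod_le_prod hb fun i _ ↦ le_max_right (a i) (b i)
  have ha_min := prod_le_prod hmin fun i _ ↦ min_le_left (a i) (b i)
  have hb_min := prod_le_prod hmin fun i _ ↦ min_le_right (a i) (b i)
  rw [abs_sub_le_iff]
  constructor <;> linarith

lemma one_add_prod_sub_prod_le_prod {ι : Type*} (s : Finset ι) {u : ι → ℝ}
    (h0 : ∀ i ∈ s, 0 ≤ u i) (h1 : ∀ i ∈ s, u i ≤ 1) :
    1 + ∏ i ∈ s, (1 + u i) - ∏ i ∈ s, (1 - u i) ≤ ∏ i ∈ s, (1 + 2 * u i) := by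
  induction s using Finset.cons_induction with
  | empty => simp
  | cons a s ha ih =>
    simp only [forall_mem_cons] at h0 h1
    simp only [prod_cons]
    have hplus : ∏ i ∈ s, (1 + u i) ≤ ∏ i ∈ s, (1 + 2 * u i) :=
      prod_le_prod (fun i hi ↦ by linarith [h0.2 i hi]) fun i hi ↦ by linarith [h0.2 i hi]
    have hminus : ∏ i ∈ s, (1 - u i) ≤ 1 :=
      prod_le_one (fun i hi ↦ by linarith [h1.2 i hi]) fun i hi ↦ by linarith [h0.2 i hi]
    have hone : 1 ≤ ∏ i ∈ s, (1 + 2 * u i) :=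
      one_le_prod fun i hi ↦ by linarith [h0.2 i hi]
    -- with `A, B, C` the products over `s`, the new factor adds `u a * (A + B)` to the left side
    -- and `2 * u a * C ≥ u a * (A + B)` to the right side
    nlinarith [ih h0.2 h1.2, mul_le_mul_of_nonneg_left hplus h0.1,
      mul_le_mul_of_nonneg_left (hminus.trans hone) h0.1]

section ProductWeights

variable {ι : Type*} [Fintype ι] [DecidableEq ι] {Ω : ι → Type*} [∀ i, Fintype (Ω i)]
  {p q : ∀ i, Ω i → ℝ} (hp0 : ∀ i y, 0 ≤ p i y) (hq0 : ∀ i y, 0 ≤ q i y)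
  (hp : ∀ i, ∑ y, p i y = 1) (hq : ∀ i, ∑ y, q i y = 1)
include hp0 hq0 hp hq

lemma two_mul_tvDist_pi_le :
    2 * tvDist (fun y : ∀ i, Ω i ↦ ∏ i, p i (y i)) (fun y ↦ ∏ i, q i (y i)) ≤
      ∏ i, (1 + tvDist (p i) (q i)) - ∏ i, (1 - tvDist (p i) (q i)) :=
  calc 2 * tvDist (fun y : ∀ i, Ω i ↦ ∏ i, p i (y i)) (fun y ↦ ∏ i, q i (y i))
      = ∑ y : ∀ i, Ω i, |∏ i, p i (y i) - ∏ i, q i (y i)| := two_mul_tvDist _ _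
    _ ≤ ∑ y : ∀ i, Ω i, (∏ i, max (p i (y i)) (q i (y i)) - ∏ i, min (p i (y i)) (q i (y i))) :=
        sum_le_sum fun y _ ↦ abs_prod_sub_prod_le_prod_max_sub_prod_min _
          (fun i _ ↦ hp0 i (y i)) fun i _ ↦ hq0 i (y i)
    _ = ∏ i, ∑ z, max (p i z) (q i z) - ∏ i, ∑ z, min (p i z) (q i z) := by
        rw [sum_sub_distrib, Fintype.prod_sum, Fintype.prod_sum]
    _ = ∏ i, (1 + tvDist (p i) (q i)) - ∏ i, (1 - tvDist (p i) (q i)) := by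
        simp only [sum_max_eq_one_add_tvDist (hp _) (hq _), sum_min_eq_one_sub_tvDist (hp _) (hq _)]

theorem one_add_two_mul_tvDist_pi_le :
    1 + 2 * tvDist (fun y : ∀ i, Ω i ↦ ∏ i, p i (y i)) (fun y ↦ ∏ i, q i (y i)) ≤
      ∏ i, (1 + 2 * tvDist (p i) (q i)) := by
  linarith [two_mul_tvDist_pi_le hp0 hq0 hp hq,
    one_add_prod_sub_prod_le_prod univ (u := fun i ↦ tvDist (p i) (q i))
      (fun _ _ ↦ tvDist_nonneg) fun i _ ↦ tvDist_le_one (hp i) (hq i) (hp0 i) (hq0 i)]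

end ProductWeights

theorem product_chain_tv_bound_general {ι : Type*} [Fintype ι] [DecidableEq ι]
    (Ω : ι → Type*) [∀ i, Fintype (Ω i)]
    (B : ∀ i, Ω i → Ω i → ℝ) (pi : ∀ i, Ω i → ℝ)
    (hB0 : ∀ i x y, 0 ≤ B i x y) (hBrow : ∀ i x, ∑ y, B i x y = 1)
    (hpi0 : ∀ i y, 0 ≤ pi i y) (hpisum : ∀ i, ∑ y, pi i y = 1) :
    1 + 2 * (⨆ x : ∀ i, Ω i,
        (1 / 2) * ∑ y : ∀ i, Ω i, |(∏ i, B i (x i) (y i)) - ∏ i, pi i (y i)|) ≤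
      ∏ i, (1 + 2 * (⨆ x : Ω i, (1 / 2) * ∑ y, |B i x y - pi i y|)) := by
  change 1 + 2 * (⨆ x : ∀ i, Ω i,
      tvDist (fun y : ∀ i, Ω i ↦ ∏ i, B i (x i) (y i)) (fun y ↦ ∏ i, pi i (y i))) ≤
    ∏ i, (1 + 2 * ⨆ x : Ω i, tvDist (B i x) (pi i))
  set d : ι → ℝ := fun i ↦ ⨆ x : Ω i, tvDist (B i x) (pi i)
  have hd_le : ∀ i x, tvDist (B i x) (pi i) ≤ d i := fun i x ↦
    le_ciSup (f := fun x ↦ tvDist (B i x) (pi i)) (Set.finite_range _).bddAbove x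
  have hd0 : ∀ i, 0 ≤ d i := fun i ↦ Real.iSup_nonneg fun _ ↦ tvDist_nonneg
  have hmono : ∀ x : ∀ i, Ω i,
      ∏ i, (1 + 2 * tvDist (B i (x i)) (pi i)) ≤ ∏ i, (1 + 2 * d i) := fun x ↦
    prod_le_prod (fun i _ ↦ by linarith [tvDist_nonneg (p := B i (x i)) (q := pi i)])
      fun i _ ↦ by linarith [hd_le i (x i)]
  have hbound : ∀ x : ∀ i, Ω i,
      tvDist (fun y : ∀ i, Ω i ↦ ∏ i, B i (x i) (y i)) (fun y ↦ ∏ i, pi i (y i)) ≤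
        (∏ i, (1 + 2 * d i) - 1) / 2 := fun x ↦ by
    linarith [hmono x,
      one_add_two_mul_tvDist_pi_le (fun i ↦ hB0 i (x i)) hpi0 (fun i ↦ hBrow i (x i)) hpisum]
  have hone : 1 ≤ ∏ i, (1 + 2 * d i) := one_le_prod fun i _ ↦ by linarith [hd0 i]
  linarith [Real.iSup_le hbound (by linarith)]

/-- For a product Markov chain, whose `t`-step transition probabilities factor as
`P^t(x,y) = ∏_i B_i^t(x_i, y_i)` with stationary distribution `π = ∏_i π_i`, the
worst-case total variation distances satisfy
`1 + 2·d_tv(P^t, π) ≤ ∏_i (1 + 2·d_tv(B_i^t, π_i))`. -/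
theorem product_chain_tv_bound {ι : Type*} [Fintype ι] [DecidableEq ι] [Nonempty ι]
    (Ω : ι → Type*) [∀ i, Fintype (Ω i)] [∀ i, Nonempty (Ω i)]
    (B : ∀ i, Ω i → Ω i → ℝ) (pi : ∀ i, Ω i → ℝ)
    (hB0 : ∀ i x y, 0 ≤ B i x y) (hBrow : ∀ i x, ∑ y, B i x y = 1)
    (hpi0 : ∀ i y, 0 ≤ pi i y) (hpisum : ∀ i, ∑ y, pi i y = 1) :
    1 + 2 * (⨆ x : ∀ i, Ω i,
        (1 / 2) * ∑ y : ∀ i, Ω i, |(∏ i, B i (x i) (y i)) - ∏ i, pi i (y i)|) ≤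
      ∏ i, (1 + 2 * (⨆ x : Ω i, (1 / 2) * ∑ y, |B i x y - pi i y|)) :=
  product_chain_tv_bound_general Ω B pi hB0 hBrow hpi0 hpisum
end

section
/- The number of lattice paths from (0,n) to (n,0) (sequences of n steps +1 and n steps −1) whose maximum partial sum height reaches at least M = n − √n is at most C(2n,n) · √π · n^{3/2} · e^{−n/3}, for n ≥ 4 sufficiently large. -/
/-!
Reflecting a walk after its first visit to a level `M > 0` (the reflection principle) maps
the balanced walks of length `2n` that reach `M` injectively to the walks ending at height `2M`,
of which there are `C(2n, n + M)`. Since heights are integers, reaching `n - √n` means reaching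
`M = n - ⌊√n⌋`, so there are at most `C(2n, ⌊√n⌋) ≤ (2n)^⌊√n⌋` high walks. Finally
`(2n)^√n ≤ 4^n e^{-n/3}` reduces to `log 2 + 2 log x ≤ (2 log 2 - 1/3) x` for `x ≥ 2`, which follows
from `log (x/2) ≤ x/2 - 1` and `log 2 > 2/3`, and `4^n < n C(2n, n)` for `n ≥ 4`.
-/

open Finset Classical

/-- The partial sum (height) of a `±1` walk after `t` steps, where `true` encodes
a `+1` step and `false` a `−1` step. -/
def walkHeight {N : ℕ} (ω : Fin N → Bool) (t : ℕ) : ℤ :=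
  ∑ j ∈ Finset.univ.filter (fun j : Fin N => j.val < t), (if ω j then (1 : ℤ) else -1)

lemma card_filter_card_eq_choose {α : Type*} [Fintype α] [DecidableEq α] (k : ℕ) :
    #{ω : α → Bool | #{a | ω a} = k} = (Fintype.card α).choose k := by
  rw [← card_univ, ← card_powersetCard]
  refine card_nbij' (fun ω => univ.filter (ω ·)) (fun s a => decide (a ∈ s)) ?_ ?_ ?_ ?_ <;>
    intro x hx
  · simpa using hx
  · simpa using hx
  · funext a
    simp
  · ext a
    simp

namespace Walk

variable {N : ℕ}

@[simp] lemma walkHeight_zero (ω : Fin N → Bool) : walkHeight ω 0 = 0 := by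
  simp [walkHeight]

lemma walkHeight_congr {ω₁ ω₂ : Fin N → Bool} {t : ℕ} (h : ∀ j : Fin N, j.val < t → ω₁ j = ω₂ j) :
    walkHeight ω₁ t = walkHeight ω₂ t :=
  sum_congr rfl fun j hj => by rw [h j (mem_filter.mp hj).2]

lemma walkHeight_succ_le (ω : Fin N → Bool) (t : ℕ) :
    walkHeight ω (t + 1) ≤ walkHeight ω t + 1 := by
  by_cases ht : t < N
  · have hfilter : univ.filter (fun j : Fin N => j.val < t + 1) =
        insert ⟨t, ht⟩ (univ.filter fun j : Fin N => j.val < t) := by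
      ext j
      simp only [mem_filter, mem_univ, true_and, mem_insert, Fin.ext_iff]
      omega
    rw [walkHeight, hfilter, sum_insert (by simp)]
    split <;> rw [walkHeight] <;> omega
  · have hfilter : univ.filter (fun j : Fin N => j.val < t + 1) =
        univ.filter fun j : Fin N => j.val < t := by
      ext j
      simp only [mem_filter, mem_univ, true_and]
      omega
    rw [walkHeight, hfilter]
    exact Int.le_add_one le_rfl

lemma walkHeight_eq_add_sum (ω : Fin N → Bool) (τ : ℕ) :
    walkHeight ω N = walkHeight ω τ +
      ∑ j ∈ univ.filter (fun j : Fin N => ¬ j.val < τ), (if ω j then (1 : ℤ) else -1) := by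
  rw [walkHeight, filter_true_of_mem fun j _ => j.isLt, walkHeight,
    sum_filter_add_sum_filter_not]

lemma walkHeight_self (ω : Fin N → Bool) :
    walkHeight ω N = 2 * (#{j | ω j} : ℤ) - N := by
  have hstep : ∀ j, (if ω j then (1 : ℤ) else -1) = 2 * (if ω j then 1 else 0) - 1 := by
    intro j; split <;> ring
  rw [walkHeight, filter_true_of_mem fun j _ => j.isLt, sum_congr rfl fun j _ => hstep j,
    sum_sub_distrib, ← mul_sum, sum_boole]
  simp

/-- The first time the walk reaches level `M` (junk value `0` if it never does). -/
noncomputable def hitTime (M : ℤ) (ω : Fin N → Bool) : ℕ :=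
  if h : ∃ t, M ≤ walkHeight ω t then Nat.find h else 0

noncomputable def reflect (M : ℤ) (ω : Fin N → Bool) : Fin N → Bool :=
  fun j => if j.val < hitTime M ω then ω j else !ω j

variable {M : ℤ} {ω : Fin N → Bool}

lemma hitTime_eq_iff (hex : ∃ t, M ≤ walkHeight ω t) {τ : ℕ} :
    hitTime M ω = τ ↔ M ≤ walkHeight ω τ ∧ ∀ t < τ, walkHeight ω t < M := by
  simp only [hitTime, dif_pos hex, Nat.find_eq_iff, not_le]

lemma le_walkHeight_hitTime (hex : ∃ t, M ≤ walkHeight ω t) : M ≤ walkHeight ω (hitTime M ω) :=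
  ((hitTime_eq_iff hex).mp rfl).1

lemma walkHeight_lt_of_lt_hitTime (hex : ∃ t, M ≤ walkHeight ω t) {t : ℕ} (ht : t < hitTime M ω) :
    walkHeight ω t < M :=
  ((hitTime_eq_iff hex).mp rfl).2 t ht

/-- Steps have size one, so the first visit to a level `M > 0` is exact. -/
lemma walkHeight_hitTime (hM : 0 < M) (hex : ∃ t, M ≤ walkHeight ω t) :
    walkHeight ω (hitTime M ω) = M := by
  have hle := le_walkHeight_hitTime hex
  obtain ⟨t, ht⟩ : ∃ t, hitTime M ω = t + 1 := by
    refine Nat.exists_eq_succ_of_ne_zero fun h0 => ?_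
    rw [h0, walkHeight_zero] at hle
    omega
  have hlt := walkHeight_lt_of_lt_hitTime hex (ht ▸ Nat.lt_succ_self t : t < hitTime M ω)
  have hstep := walkHeight_succ_le ω t
  rw [← ht] at hstep
  omega

lemma walkHeight_reflect_of_le {t : ℕ} (ht : t ≤ hitTime M ω) :
    walkHeight (reflect M ω) t = walkHeight ω t :=
  walkHeight_congr fun _ hj => if_pos (lt_of_lt_of_le hj ht)

lemma hitTime_reflect (hex : ∃ t, M ≤ walkHeight ω t) : hitTime M (reflect M ω) = hitTime M ω := by
  have hex' : ∃ t, M ≤ walkHeight (reflect M ω) t :=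
    ⟨hitTime M ω, (walkHeight_reflect_of_le le_rfl).symm ▸ le_walkHeight_hitTime hex⟩
  refine (hitTime_eq_iff hex').mpr ⟨?_, fun t ht => ?_⟩
  · rw [walkHeight_reflect_of_le le_rfl]
    exact le_walkHeight_hitTime hex
  · rw [walkHeight_reflect_of_le ht.le]
    exact walkHeight_lt_of_lt_hitTime hex ht

lemma reflect_reflect (hex : ∃ t, M ≤ walkHeight ω t) : reflect M (reflect M ω) = ω := by
  funext
  simp only [reflect, hitTime_reflect hex]
  split <;> simp

lemma walkHeight_reflect_self (hM : 0 < M) (hex : ∃ t, M ≤ walkHeight ω t) :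
    walkHeight (reflect M ω) N = 2 * M - walkHeight ω N := by
  have hflip : ∀ j ∈ univ.filter (fun j : Fin N => ¬ j.val < hitTime M ω),
      (if reflect M ω j then (1 : ℤ) else -1) = -(if ω j then 1 else -1) := by
    intro j hj
    simp only [reflect, if_neg (mem_filter.mp hj).2]
    cases ω j <;> rfl
  rw [walkHeight_eq_add_sum (reflect M ω) (hitTime M ω), walkHeight_eq_add_sum ω (hitTime M ω),
    walkHeight_reflect_of_le le_rfl, sum_congr rfl hflip, sum_neg_distrib,
    walkHeight_hitTime hM hex]
  ring

theorem card_reach_le (hM : 0 < M) (h : ℤ) :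
    #{ω : Fin N → Bool | walkHeight ω N = h ∧ ∃ t, M ≤ walkHeight ω t} ≤
      #{ω : Fin N → Bool | walkHeight ω N = 2 * M - h} := by
  refine card_le_card_of_injOn (reflect M) (fun ω hω => ?_) fun ω₁ hω₁ ω₂ hω₂ heq => ?_
  · simp only [coe_filter, Set.mem_ofPred_eq, mem_univ, true_and] at hω ⊢
    rw [walkHeight_reflect_self hM hω.2, hω.1]
  · simp only [coe_filter, Set.mem_ofPred_eq, mem_univ, true_and] at hω₁ hω₂
    rw [← reflect_reflect hω₁.2, ← reflect_reflect hω₂.2, heq]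

theorem card_balanced_reach_le {n s : ℕ} (hs : s < n) :
    #{ω : Fin (2 * n) → Bool | walkHeight ω (2 * n) = 0 ∧ ∃ t, (n - s : ℤ) ≤ walkHeight ω t} ≤
      (2 * n).choose s := by
  calc _ ≤ #{ω : Fin (2 * n) → Bool | walkHeight ω (2 * n) = 2 * (n - s : ℤ) - 0} :=
        card_reach_le (by omega) 0
    _ = #{ω : Fin (2 * n) → Bool | #{j | ω j} = 2 * n - s} := by
        congr 1
        refine filter_congr fun ω _ => ?_
        rw [walkHeight_self]
        omega
    _ = (2 * n).choose s := by
        rw [card_filter_card_eq_choose, Fintype.card_fin,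
          Nat.choose_symm (by omega)]

end Walk

lemma sub_sqrt_le_intCast_iff {n : ℕ} {z : ℤ} : (n : ℝ) - √n ≤ z ↔ (n : ℤ) - Nat.sqrt n ≤ z := by
  rw [sub_le_comm, sub_le_comm (b := (Nat.sqrt n : ℤ)), ← Real.floor_real_sqrt_eq_nat_sqrt,
    Int.le_floor]
  push_cast
  rfl

lemma Real.log_two_add_two_mul_log_le {x : ℝ} (hx : 2 ≤ x) :
    log 2 + 2 * log x ≤ (2 * log 2 - 1 / 3) * x := by
  have hhalf : log (x / 2) ≤ x / 2 - 1 := log_le_sub_one_of_pos (by positivity)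
  rw [log_div (by positivity) two_ne_zero] at hhalf
  have hlog2 := log_two_gt_d9
  nlinarith [mul_nonneg (sub_nonneg.2 hx) (by linarith : (0 : ℝ) ≤ 2 * log 2 - 4 / 3)]

lemma two_mul_pow_sqrt_le {n : ℕ} (hn : 4 ≤ n) :
    ((2 * n : ℕ) : ℝ) ^ Nat.sqrt n ≤ 4 ^ n * Real.exp (-n / 3) := by
  have hx : 2 ≤ √(n : ℝ) := Real.le_sqrt_of_sq_le (by norm_num; exact_mod_cast hn)
  have hsx : (Nat.sqrt n : ℝ) ≤ √n := Real.nat_sqrt_le_real_sqrt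
  have hlog : Real.log (2 * n) = Real.log 2 + 2 * Real.log √n := by
    rw [Real.log_mul two_ne_zero (by positivity), Real.log_sqrt (by positivity)]
    ring
  have hlog_nonneg : 0 ≤ Real.log (2 * n) := Real.log_nonneg (by norm_cast; omega)
  have hlog4 : Real.log 4 = 2 * Real.log 2 := by
    rw [show (4 : ℝ) = 2 ^ 2 by norm_num, Real.log_pow]
    norm_num
  rw [← Real.log_le_log_iff (by positivity) (by positivity), Real.log_pow,
    Real.log_mul (by positivity) (Real.exp_pos _).ne', Real.log_exp, Real.log_pow, hlog4]
  push_cast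
  calc (Nat.sqrt n : ℝ) * Real.log (2 * n) ≤ √n * Real.log (2 * n) :=
        mul_le_mul_of_nonneg_right hsx hlog_nonneg
    _ ≤ √n * ((2 * Real.log 2 - 1 / 3) * √n) := by
        rw [hlog]
        exact mul_le_mul_of_nonneg_left (Real.log_two_add_two_mul_log_le hx) (by positivity)
    _ = n * (2 * Real.log 2) + -n / 3 := by
        rw [mul_left_comm, Real.mul_self_sqrt (by positivity)]
        ring

lemma four_pow_le_choose_mul {n : ℕ} (hn : 4 ≤ n) :
    (4 : ℝ) ^ n ≤ (2 * n).choose n * √Real.pi * (n : ℝ) ^ ((3 : ℝ) / 2) := by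
  have hcentral : (4 : ℝ) ^ n ≤ n * (2 * n).choose n := by
    rw [← Nat.centralBinom_eq_two_mul_choose]
    exact_mod_cast (Nat.four_pow_lt_mul_centralBinom n hn).le
  have hpi : 1 ≤ √Real.pi := Real.one_le_sqrt.mpr (by linarith [Real.pi_gt_three])
  have hpow : (n : ℝ) ≤ (n : ℝ) ^ ((3 : ℝ) / 2) := by
    simpa using Real.rpow_le_rpow_of_exponent_le (by norm_cast; omega : (1 : ℝ) ≤ n)
      (by norm_num : (1 : ℝ) ≤ 3 / 2)
  calc (4 : ℝ) ^ n ≤ (2 * n).choose n * (1 * n) := by linarith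
    _ ≤ (2 * n).choose n * (√Real.pi * (n : ℝ) ^ ((3 : ℝ) / 2)) := by gcongr
    _ = _ := by ring

/-- The number of staircase walks (balanced `±1` sequences of length `2n`) whose
maximum height reaches at least `M = n − √n` is at most
`C(2n,n) · √π · n^{3/2} · e^{−n/3}`, for `n ≥ 4`. -/
theorem staircase_high_walks_bound (n : ℕ) (hn : 4 ≤ n) :
    ((Finset.univ.filter (fun ω : Fin (2 * n) → Bool =>
        (Finset.univ.filter (fun j : Fin (2 * n) => ω j)).card = n ∧
        ∃ t : ℕ, t ≤ 2 * n ∧ (n : ℝ) - Real.sqrt n ≤ (walkHeight ω t : ℝ))).card : ℝ) ≤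
      (Nat.choose (2 * n) n : ℝ) * Real.sqrt Real.pi * (n : ℝ) ^ ((3 : ℝ) / 2) *
        Real.exp (-(n : ℝ) / 3) := by
  have hsub : univ.filter (fun ω : Fin (2 * n) → Bool => #{j | ω j} = n ∧
        ∃ t : ℕ, t ≤ 2 * n ∧ (n : ℝ) - √n ≤ (walkHeight ω t : ℝ)) ⊆
      univ.filter (fun ω : Fin (2 * n) → Bool =>
        walkHeight ω (2 * n) = 0 ∧ ∃ t, (n - Nat.sqrt n : ℤ) ≤ walkHeight ω t) := by
    intro ω hω
    obtain ⟨hbalanced, t, -, ht⟩ := (mem_filter.mp hω).2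
    refine mem_filter.mpr ⟨mem_univ ω, ?_, t, sub_sqrt_le_intCast_iff.mp ht⟩
    rw [Walk.walkHeight_self, hbalanced]
    push_cast
    ring
  have hcard :=
    (card_le_card hsub).trans (Walk.card_balanced_reach_le (Nat.sqrt_lt_self (by omega)))
  calc _ ≤ ((2 * n).choose (Nat.sqrt n) : ℝ) := by exact_mod_cast hcard
    _ ≤ ((2 * n : ℕ) : ℝ) ^ Nat.sqrt n := by exact_mod_cast Nat.choose_le_pow _ _
    _ ≤ 4 ^ n * Real.exp (-n / 3) := two_mul_pow_sqrt_le hn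
    _ ≤ _ := mul_le_mul_of_nonneg_right (four_pow_le_choose_mul hn) (Real.exp_pos _).le
end
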